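/- Let F_k be the sequence of polynomials in the variable u whose coefficients are themselves polynomials in a variable ν, defined by F_0 = 1 and F_{k+1}(u) = (ν − k)·u·F_k(u) + (u² − 1)·d/du[F_k(u)]. Then for all natural numbers k and r with r ≤ k and r ≡ k (mod 2), the coefficient of u^r in F_k is a polynomial in ν of degree exactly (k + r)/2. -/
import Mathlib


open Polynomial

/-- The polynomials `F_k ∈ (ℚ[ν])[u]` with `F_0 = 1` and
`F_{k+1}(u) = (ν - k)·u·F_k(u) + (u² - 1)·d/du[F_k(u)]`. -/
noncomputable def FPoly : ℕ → Polynomial (Polynomial ℚ)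
  | 0 => 1
  | k + 1 =>
      Polynomial.C (Polynomial.X - Polynomial.C (k : ℚ)) * Polynomial.X * FPoly k +
        (Polynomial.X ^ 2 - 1) * Polynomial.derivative (FPoly k)

lemma FPoly_coeff_zero (k : ℕ) : (FPoly (k+1)).coeff 0 = -(FPoly k).coeff 1 := by
  rw [FPoly]
  simp [sub_mul, pow_two, mul_assoc, mul_coeff_zero, coeff_derivative]

lemma FPoly_coeff_succ (k s : ℕ) : (FPoly (k+1)).coeff (s+1) =
    (X + C ((s:ℚ) - k)) * (FPoly k).coeff s - C ((s:ℚ)+2) * (FPoly k).coeff (s+2) := by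
  rw [FPoly]
  cases s with
  | zero =>
    simp [sub_mul, pow_two, mul_assoc, coeff_X_mul, coeff_derivative, add_mul, map_sub, map_add, map_ofNat]
    ring
  | succ t =>
    simp [sub_mul, pow_two, mul_assoc, coeff_X_mul, coeff_derivative, add_mul, map_sub, map_add, map_ofNat]
    ring

lemma FPoly_coeff_eq_zero : ∀ k r, (∀ m, k ≠ r + 2*m) → (FPoly k).coeff r = 0 := by
  intro k
  induction k with
  | zero =>
    intro r h
    have : r ≠ 0 := fun hr => h 0 (by omega)
    simp [FPoly, coeff_one, this]
  | succ k ih =>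
    intro r h
    match r with
    | 0 =>
      rw [FPoly_coeff_zero, ih 1 (fun m hm => h (m+1) (by omega))]
      simp
    | s+1 =>
      rw [FPoly_coeff_succ, ih s (fun m hm => h m (by omega)),
        ih (s+2) (fun m hm => h (m+1) (by omega))]
      simp

lemma FPoly_key : ∀ k r m, k = r + 2*m →
    ((FPoly k).coeff r).degree ≤ ((r+m : ℕ) : WithBot ℕ) ∧
    0 < (-1:ℚ)^m * ((FPoly k).coeff r).coeff (r+m) := by
  intro k
  induction k with
  | zero =>
    intro r m hkm
    have hr : r = 0 := by omega
    have hm : m = 0 := by omega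
    subst hr hm
    rw [FPoly]
    simp
  | succ k ih =>
    intro r m hkm
    match r with
    | 0 =>
      obtain ⟨m', rfl⟩ : ∃ m', m = m' + 1 := ⟨m - 1, by omega⟩
      obtain ⟨hd, hc⟩ := ih 1 m' (by omega)
      have hidx : 0 + (m' + 1) = 1 + m' := by omega
      constructor
      · rw [FPoly_coeff_zero, degree_neg, hidx]; exact hd
      · rw [FPoly_coeff_zero, hidx, coeff_neg]
        have : (-1:ℚ)^(m'+1) * -((FPoly k).coeff 1).coeff (1 + m')
            = (-1:ℚ)^m' * ((FPoly k).coeff 1).coeff (1 + m') := by ring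
        rw [this]; exact hc
    | s+1 =>
      obtain ⟨hdA, hcA⟩ := ih s m (by omega)
      rw [FPoly_coeff_succ]
      have hdeg1 : (X + C ((s:ℚ) - k)).degree = 1 := degree_X_add_C _
      have hdmul : ((X + C ((s:ℚ) - k)) * (FPoly k).coeff s).degree
          ≤ ((s + 1 + m : ℕ) : WithBot ℕ) := by
        refine le_trans (degree_mul_le _ _) ?_
        rw [hdeg1]
        refine le_trans (add_le_add le_rfl hdA) ?_
        rw [← Nat.cast_one, ← Nat.cast_add]
        exact_mod_cast Nat.le_of_eq (by omega)
      have hAhigh : ((FPoly k).coeff s).coeff (s + 1 + m) = 0 := by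
        apply coeff_eq_zero_of_degree_lt
        refine lt_of_le_of_lt hdA ?_
        exact_mod_cast Nat.lt_of_lt_of_le (Nat.lt_succ_self _) (by omega)
      have hcmul : ((X + C ((s:ℚ) - k)) * (FPoly k).coeff s).coeff (s + 1 + m)
          = ((FPoly k).coeff s).coeff (s + m) := by
        have : s + 1 + m = (s + m) + 1 := by omega
        rw [this, add_mul, coeff_add, coeff_X_mul, coeff_C_mul]
        have : (s + m) + 1 = s + 1 + m := by omega
        rw [this, hAhigh, mul_zero, add_zero]
      match m with
      | 0 =>
        have hB : (FPoly k).coeff (s+2) = 0 :=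
          FPoly_coeff_eq_zero k (s+2) (fun m' hm' => by omega)
        constructor
        · rw [hB, mul_zero, sub_zero]; exact hdmul
        · rw [hB, mul_zero, sub_zero, hcmul]; exact hcA
      | m'+1 =>
        obtain ⟨hdB, hcB⟩ := ih (s+2) m' (by omega)
        have hidxB : s + 2 + m' = s + 1 + (m' + 1) := by omega
        have hdmulB : (C ((s:ℚ)+2) * (FPoly k).coeff (s+2)).degree
            ≤ ((s + 1 + (m' + 1) : ℕ) : WithBot ℕ) := by
          refine le_trans (degree_mul_le _ _) ?_
          refine le_trans (add_le_add degree_C_le hdB) ?_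
          rw [zero_add, ← hidxB]
        constructor
        · exact le_trans (degree_sub_le _ _) (max_le hdmul hdmulB)
        · rw [coeff_sub, hcmul, coeff_C_mul, ← hidxB]
          have hcB' : 0 < ((s:ℚ)+2) * ((-1:ℚ)^m' * ((FPoly k).coeff (s+2)).coeff (s+2+m')) :=
            mul_pos (by positivity) hcB
          have : (-1:ℚ)^(m'+1) * (((FPoly k).coeff s).coeff (s + (m'+1))
              - ((s:ℚ)+2) * ((FPoly k).coeff (s+2)).coeff (s+2+m'))
              = (-1:ℚ)^(m'+1) * ((FPoly k).coeff s).coeff (s + (m'+1))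
              + ((s:ℚ)+2) * ((-1:ℚ)^m' * ((FPoly k).coeff (s+2)).coeff (s+2+m')) := by
            ring
          rw [this]
          linarith [hcA, hcB']

theorem FPoly_coeff_degree (k r : ℕ) (hrk : r ≤ k) (hpar : r % 2 = k % 2) :
    ((FPoly k).coeff r).degree = (((k + r) / 2 : ℕ) : WithBot ℕ) := by
  set m := (k - r) / 2 with hm
  obtain ⟨hd, hc⟩ := FPoly_key k r m (by omega)
  have hne : ((FPoly k).coeff r).coeff (r + m) ≠ 0 := by
    intro h
    rw [h, mul_zero] at hc
    exact lt_irrefl _ hc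
  have h1 : ((r + m : ℕ) : WithBot ℕ) ≤ ((FPoly k).coeff r).degree :=
    le_degree_of_ne_zero hne
  have h2 : (k + r) / 2 = r + m := by omega
  rw [h2]
  exact le_antisymm hd h1
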